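/- arXiv:2004.10198 — 2 statements merged into one kernel-verified Lean document; each statement's English description precedes it below -/
import Mathlib

section
/- If n ≥ 6 and C is a perfect code of the Lucas cube Λ_n, then the all-zeros string 0^n belongs to C. -/
def isFib {n : ℕ} (b : Fin n → Bool) : Prop :=
  ∀ i : Fin n, ∀ h : (i : ℕ) + 1 < n, ¬(b i = true ∧ b ⟨(i : ℕ) + 1, h⟩ = true)

def isLucas {n : ℕ} (b : Fin n → Bool) : Prop :=
  isFib b ∧ ∀ h0 : 0 < n, ¬(b ⟨0, h0⟩ = true ∧ b ⟨n - 1, by omega⟩ = true)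

def wt {n : ℕ} (b : Fin n → Bool) : ℕ :=
  (Finset.univ.filter fun i => b i = true).card

def lucasCube (n : ℕ) : SimpleGraph {b : Fin n → Bool // isLucas b} where
  Adj x y := hammingDist x.1 y.1 = 1
  symm := ⟨fun x y h => by change hammingDist x.1 y.1 = 1 at h; show hammingDist y.1 x.1 = 1; rw [hammingDist_comm]; exact h⟩
  loopless := ⟨fun x h => by change hammingDist x.1 x.1 = 1 at h; rw [hammingDist_self] at h; exact absurd h (by omega)⟩

def IsPerfectCode {V : Type*} (G : SimpleGraph V) (C : Set V) : Prop :=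
  ∀ v : V, ∃! c : V, c ∈ C ∧ (v = c ∨ G.Adj v c)

def ch (a b : ℤ) : ℕ := if 0 ≤ a ∧ 0 ≤ b then a.toNat.choose b.toNat else 0

/-!
Suppose `0ⁿ ∉ C` and let `cₖ` be the number of codewords of weight `k`. A word of weight `k` can
only be dominated by a codeword of weight `k - 1`, `k` or `k + 1`; a codeword of weight `k + 1`
dominates exactly `k + 1` words of weight `k`, and one of weight `1` dominates exactly `n - 3` words
of weight `2`. Counting the words of weight `0`, `1` and `2` by their dominating codeword gives
`c₁ = 1`, `n = c₁ + 2 c₂` and `n (n - 3) / 2 = (n - 3) c₁ + c₂ + 3 c₃`, the number of words of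
weight `2` coming from double counting the edges between the first two layers. Eliminating `c₁`
and `c₂` leaves `n² + 1 = 3 (2 c₃ + 2 n - 2)`, impossible since `-1` is not a square mod `3`.
-/

open Finset

theorem Finset.sum_eq_sum_fiberwise_of_ne_zero {ι κ M : Type*} [AddCommMonoid M] [DecidableEq κ]
    {s : Finset ι} {t : Finset κ} (g : ι → κ) {f : ι → M} (h : ∀ i ∈ s, f i ≠ 0 → g i ∈ t) :
    ∑ i ∈ s, f i = ∑ j ∈ t, ∑ i ∈ s with g i = j, f i := by
  rw [sum_fiberwise_eq_sum_filter, sum_filter_of_ne h]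

theorem Fin.one_ne_zero_of_two_le {n : ℕ} [NeZero n] (hn : 2 ≤ n) : (1 : Fin n) ≠ 0 := by
  simp [Fin.ext_iff, Nat.one_mod_eq_one.2 (by omega : n ≠ 1)]

theorem Int.not_three_dvd_sq_add_one (x : ℤ) : ¬ 3 ∣ x ^ 2 + 1 := by
  intro h
  have := (ZMod.intCast_zmod_eq_zero_iff_dvd (x ^ 2 + 1) 3).2 h
  push_cast at this
  generalize (x : ZMod 3) = y at this
  revert y
  decide

namespace IsPerfectCode

variable {V : Type*} [DecidableEq V] {G : SimpleGraph V} [DecidableRel G.Adj] {C : Finset V}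

theorem card_filter_eq_one (hC : IsPerfectCode G C) (v : V) :
    #{c ∈ C | v = c ∨ G.Adj v c} = 1 := by
  obtain ⟨c, hc, huniq⟩ := hC v
  refine card_eq_one.2 ⟨c, ?_⟩
  ext c'
  simp only [mem_filter, mem_singleton]
  exact ⟨fun h ↦ huniq c' h, fun h ↦ h ▸ hc⟩

theorem card_eq_sum_card_filter (hC : IsPerfectCode G C) (W : Finset V) :
    #W = ∑ c ∈ C, #{v ∈ W | v = c ∨ G.Adj v c} := by
  have := sum_card_bipartiteAbove_eq_sum_card_bipartiteBelow (s := W) (t := C)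
    (fun v c ↦ v = c ∨ G.Adj v c)
  simp only [bipartiteAbove, bipartiteBelow, hC.card_filter_eq_one, sum_const, smul_eq_mul,
    mul_one] at this
  exact this

end IsPerfectCode

namespace LucasCube

variable {n : ℕ}

def supp (b : Fin n → Bool) : Finset (Fin n) := {i | b i = true}

@[simp]
theorem mem_supp {b : Fin n → Bool} {i : Fin n} : i ∈ supp b ↔ b i = true := by
  simp [supp]

theorem wt_eq_card_supp (b : Fin n → Bool) : wt b = #(supp b) := rfl

theorem supp_injective : Function.Injective (supp : (Fin n → Bool) → Finset (Fin n)) := by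
  intro b b' h
  funext i
  simpa using congr(i ∈ $h)

theorem hammingDist_eq_card_sdiff_add_card_sdiff (x y : Fin n → Bool) :
    hammingDist x y = #(supp x \ supp y) + #(supp y \ supp x) := by
  rw [← card_union_of_disjoint disjoint_sdiff_sdiff, hammingDist]
  congr 1
  ext i
  simp only [mem_filter, mem_univ, true_and, mem_union, mem_sdiff, mem_supp]
  cases x i <;> cases y i <;> decide

theorem wt_add_card_sdiff (x y : Fin n → Bool) :
    wt x + #(supp y \ supp x) = wt y + #(supp x \ supp y) := by
  rw [wt_eq_card_supp, wt_eq_card_supp, add_comm, card_sdiff_add_card, add_comm (#(supp y)),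
    card_sdiff_add_card, union_comm]

-- `i + 1` wraps around in `Fin n`, so this also forbids `{0, n - 1}`.
def IsLucasSet [NeZero n] (s : Finset (Fin n)) : Prop := ∀ i ∈ s, i + 1 ∉ s

theorem isLucas_iff [NeZero n] {b : Fin n → Bool} : isLucas b ↔ IsLucasSet (supp b) := by
  obtain ⟨m, rfl⟩ : ∃ m, n = m + 1 := ⟨n - 1, (Nat.sub_add_cancel (NeZero.one_le)).symm⟩
  simp only [isLucas, isFib, IsLucasSet, mem_supp]
  constructor
  · rintro ⟨hfib, hwrap⟩ i hi hi'
    by_cases hlast : i = Fin.last m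
    · subst hlast
      rw [Fin.last_add_one] at hi'
      exact hwrap m.succ_pos ⟨hi', by convert hi using 2; ext; simp⟩
    · have hlt : (i : ℕ) + 1 < m + 1 := by simpa using Fin.val_lt_last hlast
      exact hfib i hlt ⟨hi, by convert hi' using 2; ext; simp [Fin.val_add_one_of_lt' hlt]⟩
  · intro h
    refine ⟨fun i hi ⟨h1, h2⟩ ↦ h i h1 ?_, fun _ ⟨h1, h2⟩ ↦ h (Fin.last m) ?_ ?_⟩
    · convert h2 using 2; ext; simp [Fin.val_add_one_of_lt' hi]
    · convert h2 using 2; ext; simp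
    · rwa [Fin.last_add_one]

theorem IsLucasSet.mono [NeZero n] {s t : Finset (Fin n)} (hst : s ⊆ t) (ht : IsLucasSet t) :
    IsLucasSet s :=
  fun i hi hi' ↦ ht i (hst hi) (hst hi')

instance [NeZero n] : DecidablePred (IsLucasSet (n := n)) :=
  fun s ↦ inferInstanceAs (Decidable (∀ i ∈ s, i + 1 ∉ s))

theorem isLucasSet_pair_iff [NeZero n] (hn : 2 ≤ n) {j k : Fin n} :
    IsLucasSet {j, k} ↔ k ≠ j + 1 ∧ k ≠ j - 1 := by
  have h10 := Fin.one_ne_zero_of_two_le (by omega : 2 ≤ n)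
  simp only [IsLucasSet, mem_insert, mem_singleton, forall_eq_or_imp, forall_eq, add_eq_left, h10,
    false_or, or_false]
  rw [ne_eq, ne_eq, eq_sub_iff_add_eq, @eq_comm _ k]

theorem card_filter_isLucasSet_pair [NeZero n] (hn : 3 ≤ n) (j : Fin n) :
    #{s ∈ powersetCard 2 univ | IsLucasSet s ∧ j ∈ s} = n - 3 := by
  have h10 := Fin.one_ne_zero_of_two_le (by omega : 2 ≤ n)
  have h20 : (1 + 1 : Fin n) ≠ 0 := by
    simp [Fin.ext_iff, Fin.val_add, Nat.one_mod_eq_one.2 (by omega : n ≠ 1),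
      Nat.mod_eq_of_lt (by omega : 2 < n)]
  have hfilter : {s ∈ powersetCard 2 (univ : Finset (Fin n)) | IsLucasSet s ∧ j ∈ s} =
      ({j - 1, j, j + 1}ᶜ : Finset (Fin n)).image (fun k ↦ ({j, k} : Finset (Fin n))) := by
    ext s
    simp only [mem_filter, mem_powersetCard, subset_univ, true_and, mem_image, mem_compl,
      mem_insert, mem_singleton, not_or]
    constructor
    · rintro ⟨hcard, hs, hj⟩
      obtain ⟨k, hk⟩ := card_eq_one.1 (by rw [card_erase_of_mem hj, hcard] : #(s.erase j) = 1)
      have hkj : k ≠ j := (mem_erase.1 (hk ▸ mem_singleton_self k)).1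
      have hs' : s = {j, k} := by rw [← insert_erase hj, hk]
      rw [hs', isLucasSet_pair_iff (by omega)] at hs
      exact ⟨k, ⟨hs.2, hkj, hs.1⟩, hs'.symm⟩
    · rintro ⟨k, ⟨hk1, hkj, hk2⟩, rfl⟩
      exact ⟨card_pair (Ne.symm hkj), (isLucasSet_pair_iff (by omega)).2 ⟨hk2, hk1⟩,
        mem_insert_self _ _⟩
  have htriple : #({j - 1, j, j + 1} : Finset (Fin n)) = 3 := by
    rw [card_insert_of_notMem, card_pair] <;>
      simp [sub_eq_iff_eq_add, add_assoc, h10, h20]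
  rw [hfilter, card_image_of_injOn, card_compl, Fintype.card_fin, htriple]
  intro k hk k' hk' h
  simp only [coe_compl, Set.mem_compl_iff, coe_insert, coe_singleton, Set.mem_insert_iff,
    Set.mem_singleton_iff, not_or] at hk hk'
  have := congr(k ∈ $h)
  simp only [mem_insert, mem_singleton] at this
  tauto

abbrev Vertex (n : ℕ) := {b : Fin n → Bool // isLucas b}

instance : DecidablePred (isLucas (n := n)) :=
  fun b ↦ by unfold isLucas isFib; infer_instance

instance : DecidableRel (lucasCube n).Adj :=
  fun v w ↦ inferInstanceAs (Decidable (hammingDist v.1 w.1 = 1))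

theorem isLucasSet_supp [NeZero n] (v : Vertex n) : IsLucasSet (supp v.1) :=
  isLucas_iff.1 v.2

theorem exists_supp_eq [NeZero n] {s : Finset (Fin n)} (hs : IsLucasSet s) :
    ∃ v : Vertex n, supp v.1 = s := by
  have hsupp : supp (fun i ↦ decide (i ∈ s)) = s := by ext; simp
  exact ⟨⟨fun i ↦ decide (i ∈ s), isLucas_iff.2 (by rw [hsupp]; exact hs)⟩, hsupp⟩

theorem supp_val_injective : Function.Injective (fun v : Vertex n ↦ supp v.1) :=
  supp_injective.comp Subtype.val_injective

theorem adj_iff {v w : Vertex n} :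
    (lucasCube n).Adj v w ↔ #(supp v.1 \ supp w.1) + #(supp w.1 \ supp v.1) = 1 := by
  rw [← hammingDist_eq_card_sdiff_add_card_sdiff]
  rfl

theorem wt_eq_or_of_adj {v w : Vertex n} (h : (lucasCube n).Adj v w) :
    wt v.1 = wt w.1 + 1 ∨ wt w.1 = wt v.1 + 1 := by
  have := wt_add_card_sdiff v.1 w.1
  rw [adj_iff] at h
  omega

theorem adj_iff_supp_subset {v w : Vertex n} (h : wt v.1 + 1 = wt w.1) :
    (lucasCube n).Adj v w ↔ supp v.1 ⊆ supp w.1 := by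
  have := wt_add_card_sdiff v.1 w.1
  rw [adj_iff, ← sdiff_eq_empty_iff_subset, ← card_eq_zero]
  omega

def layer (n k : ℕ) : Finset (Vertex n) := {v | wt v.1 = k}

@[simp]
theorem mem_layer {k : ℕ} {v : Vertex n} : v ∈ layer n k ↔ wt v.1 = k := by
  simp [layer]

theorem card_filter_layer [NeZero n] (k : ℕ) (P : Finset (Fin n) → Prop) [DecidablePred P] :
    #{v ∈ layer n k | P (supp v.1)} = #{s ∈ powersetCard k univ | IsLucasSet s ∧ P s} := by
  rw [← card_image_of_injective _ supp_val_injective]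
  congr 1
  ext s
  simp only [mem_image, mem_filter, mem_layer, mem_powersetCard, subset_univ, true_and,
    wt_eq_card_supp]
  constructor
  · rintro ⟨v, ⟨hk, hP⟩, rfl⟩
    exact ⟨hk, isLucasSet_supp v, hP⟩
  · rintro ⟨hk, hs, hP⟩
    obtain ⟨v, rfl⟩ := exists_supp_eq hs
    exact ⟨v, ⟨hk, hP⟩, rfl⟩

theorem card_layer_one [NeZero n] (hn : 2 ≤ n) : #(layer n 1) = n := by
  have h := card_filter_layer (n := n) 1 (fun _ ↦ True)
  simp only [filter_true, and_true] at h
  rw [h, filter_true_of_mem, card_powersetCard, card_univ, Fintype.card_fin, Nat.choose_one_right]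
  intro s hs
  obtain ⟨j, rfl⟩ := card_eq_one.1 (mem_powersetCard.1 hs).2
  have h10 := Fin.one_ne_zero_of_two_le (by omega : 2 ≤ n)
  simpa [IsLucasSet] using h10

section Domination

variable {k : ℕ} {c : Vertex n}

theorem filter_layer_dominated_of_wt_eq (hc : wt c.1 = k) :
    {v ∈ layer n k | v = c ∨ (lucasCube n).Adj v c} = {c} := by
  ext v
  simp only [mem_filter, mem_layer, mem_singleton]
  constructor
  · rintro ⟨hv, rfl | hadj⟩
    · rfl
    · have := wt_eq_or_of_adj hadj
      omega
  · rintro rfl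
    exact ⟨hc, Or.inl rfl⟩

theorem filter_layer_dominated_eq_empty (h : k + 2 ≤ wt c.1 ∨ wt c.1 + 2 ≤ k) :
    {v ∈ layer n k | v = c ∨ (lucasCube n).Adj v c} = ∅ := by
  refine filter_eq_empty_iff.2 fun v hv hdom ↦ ?_
  rw [mem_layer] at hv
  rcases hdom with rfl | hadj
  · omega
  · have := wt_eq_or_of_adj hadj
    omega

theorem card_layer_dominated_of_wt_eq_succ [NeZero n] (hc : wt c.1 = k + 1) :
    #{v ∈ layer n k | v = c ∨ (lucasCube n).Adj v c} = k + 1 := by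
  have hfilter : {v ∈ layer n k | v = c ∨ (lucasCube n).Adj v c} =
      {v ∈ layer n k | supp v.1 ⊆ supp c.1} := by
    refine filter_congr fun v hv ↦ ?_
    rw [mem_layer] at hv
    rw [← adj_iff_supp_subset (by omega)]
    exact or_iff_right (by rintro rfl; omega)
  have hsubsets : {s ∈ powersetCard k (univ : Finset (Fin n)) | IsLucasSet s ∧ s ⊆ supp c.1} =
      powersetCard k (supp c.1) := by
    ext s
    simp only [mem_filter, mem_powersetCard, subset_univ, true_and]
    exact ⟨fun h ↦ ⟨h.2.2, h.1⟩, fun h ↦ ⟨h.2, (isLucasSet_supp c).mono h.1, h.1⟩⟩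
  rw [hfilter, card_filter_layer k (· ⊆ supp c.1), hsubsets, card_powersetCard,
    ← wt_eq_card_supp, hc, Nat.choose_succ_self_right]

theorem card_layer_two_dominated_of_wt_eq_one [NeZero n] (hn : 3 ≤ n) (hc : wt c.1 = 1) :
    #{v ∈ layer n 2 | v = c ∨ (lucasCube n).Adj v c} = n - 3 := by
  obtain ⟨j, hj⟩ := card_eq_one.1 (show #(supp c.1) = 1 from hc)
  have hfilter : {v ∈ layer n 2 | v = c ∨ (lucasCube n).Adj v c} =
      {v ∈ layer n 2 | j ∈ supp v.1} := by
    refine filter_congr fun v hv ↦ ?_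
    rw [mem_layer] at hv
    rw [(lucasCube n).adj_comm, adj_iff_supp_subset (by omega), hj, singleton_subset_iff]
    exact or_iff_right (by rintro rfl; omega)
  rw [hfilter, card_filter_layer 2 (j ∈ ·), card_filter_isLucasSet_pair hn]

theorem card_layer_two [NeZero n] (hn : 3 ≤ n) : #(layer n 2) * 2 = n * (n - 3) := by
  have := card_mul_eq_card_mul (s := layer n 1) (t := layer n 2)
    (fun u w ↦ w = u ∨ (lucasCube n).Adj w u)
    (fun u hu ↦ card_layer_two_dominated_of_wt_eq_one hn (mem_layer.1 hu))
    (fun w hw ↦ by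
      simp only [bipartiteBelow, @eq_comm _ w, (lucasCube n).adj_comm w]
      exact card_layer_dominated_of_wt_eq_succ (mem_layer.1 hw))
  rw [card_layer_one (by omega)] at this
  omega

end Domination

theorem adj_iff_wt_eq_one {v w : Vertex n} (hv : wt v.1 = 0) :
    (lucasCube n).Adj v w ↔ wt w.1 = 1 := by
  refine ⟨fun h ↦ by have := wt_eq_or_of_adj h; omega, fun h ↦ ?_⟩
  have hsupp : supp v.1 = ∅ := card_eq_zero.1 hv
  rw [adj_iff_supp_subset (by omega), hsupp]
  exact empty_subset _

theorem eq_false_of_wt_eq_zero {b : Fin n → Bool} (hb : wt b = 0) : b = fun _ ↦ false := by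
  have hsupp : supp b = ∅ := card_eq_zero.1 hb
  apply supp_injective
  rw [hsupp]
  ext
  simp

theorem card_filter_wt_eq_one_of_isPerfectCode {C : Finset (Vertex n)}
    (hC : IsPerfectCode (lucasCube n) C) {z : Vertex n} (hz : wt z.1 = 0) (hzC : z ∉ C) :
    #{c ∈ C | wt c.1 = 1} = 1 := by
  refine (congrArg card (filter_congr fun c hc ↦ ?_)).trans (hC.card_filter_eq_one z)
  rw [adj_iff_wt_eq_one hz]
  exact (or_iff_right (by rintro rfl; exact hzC hc)).symm

theorem card_layer_succ_eq_of_isPerfectCode {C : Finset (Vertex n)} [NeZero n]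
    (hC : IsPerfectCode (lucasCube n) C) (j a : ℕ)
    (ha : ∀ c ∈ C, wt c.1 = j → #{v ∈ layer n (j + 1) | v = c ∨ (lucasCube n).Adj v c} = a) :
    #(layer n (j + 1)) = a * #{c ∈ C | wt c.1 = j} + #{c ∈ C | wt c.1 = j + 1} +
      (j + 2) * #{c ∈ C | wt c.1 = j + 2} := by
  rw [hC.card_eq_sum_card_filter, sum_eq_sum_fiberwise_of_ne_zero (fun c ↦ wt c.1)
    (t := {j, j + 1, j + 2}), sum_insert (by simp), sum_pair (by omega),
    sum_const_nat fun c hc ↦ ha c (mem_filter.1 hc).1 (mem_filter.1 hc).2,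
    sum_const_nat fun c hc ↦ by
      rw [filter_layer_dominated_of_wt_eq (mem_filter.1 hc).2, card_singleton],
    sum_const_nat fun c hc ↦ card_layer_dominated_of_wt_eq_succ (mem_filter.1 hc).2]
  · ring
  · intro c _ hc
    by_contra hwt
    simp only [mem_insert, mem_singleton, not_or] at hwt
    exact hc (by rw [filter_layer_dominated_eq_empty (by omega), card_empty])

end LucasCube

/-- If n ≥ 6 and C is a perfect code of Λ_n, then 0^n ∈ C. -/
theorem stmt11 (n : ℕ) (hn : 6 ≤ n) (C : Set {b : Fin n → Bool // isLucas b})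
    (hC : IsPerfectCode (lucasCube n) C) :
    (⟨fun _ => false, by constructor <;> simp [isFib]⟩ : {b : Fin n → Bool // isLucas b}) ∈ C := by
  open LucasCube in
  have : NeZero n := ⟨by omega⟩
  obtain ⟨C, rfl⟩ := C.toFinite.exists_finset_coe
  by_contra hzero
  have hwt : ∀ c ∈ C, wt c.1 ≠ 0 := fun c hc h ↦ hzero <| by
    convert mem_coe.2 hc
    exact Subtype.ext (eq_false_of_wt_eq_zero h).symm
  have hC₁ := card_filter_wt_eq_one_of_isPerfectCode hC (by simp [wt]) hzero
  have h₁ := card_layer_succ_eq_of_isPerfectCode hC 0 0 fun c hc h ↦ (hwt c hc h).elim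
  have h₂ := card_layer_succ_eq_of_isPerfectCode hC 1 (n - 3) fun c _ ↦
    card_layer_two_dominated_of_wt_eq_one (by omega)
  have h₃ := card_layer_two (n := n) (by omega)
  rw [card_layer_one (by omega), hC₁] at h₁
  rw [hC₁] at h₂
  simp only [Nat.reduceAdd, zero_mul, zero_add, mul_one] at h₁ h₂
  generalize #(layer n 2) = w₂ at h₂ h₃
  generalize #{c ∈ C | wt c.1 = 2} = c₂ at h₁ h₂
  generalize #{c ∈ C | wt c.1 = 3} = c₃ at h₂
  apply Int.not_three_dvd_sq_add_one n
  refine ⟨2 * c₃ + 2 * n - 2, ?_⟩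
  zify [(by omega : 3 ≤ n)] at h₁ h₂ h₃
  linear_combination 2 * h₂ - h₃ - h₁
end

section
/- Let p ≥ 2 and n = 2^p - 1, and let D be a Hamming code of length n (a linear perfect code of Q_n containing 1^n). Then C = D \ {1^n} is a perfect code of both Λ_n(1^{n-1}) and Λ_n(1^{n-2}), of cardinality 2^n/(n+1) - 1. -/
def hypercube (n : ℕ) : SimpleGraph (Fin n → ZMod 2) where
  Adj x y := hammingDist x y = 1
  symm := ⟨fun x y h => by exact (hammingDist_comm _ _).trans h⟩
  loopless := ⟨fun x h => by
    exact absurd ((hammingDist_self _).symm.trans h) (by omega)⟩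

/-- Some circulation of the string b contains 1^s as a substring. -/
def hasCircOnes (n s : ℕ) (b : Fin n → ZMod 2) : Prop :=
  ∃ i : Fin n, ∃ t : ℕ, t + s ≤ n ∧ ∀ j : ℕ, j < s →
    b ⟨((i : ℕ) + t + j) % n, Nat.mod_lt _ (Nat.lt_of_le_of_lt (Nat.zero_le _) i.isLt)⟩
      = 1

/-- The generalized Lucas cube Λ_n(1^s). -/
def genLucas (n s : ℕ) : SimpleGraph {b : Fin n → ZMod 2 // ¬ hasCircOnes n s b} where
  Adj x y := hammingDist x.1 y.1 = 1
  symm := ⟨fun x y h => by exact (hammingDist_comm _ _).trans h⟩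
  loopless := ⟨fun x h => by
    exact absurd ((hammingDist_self _).symm.trans h) (by omega)⟩

/-! The closed neighbourhood of `1ⁿ` in `Qₙ` consists of the strings with at most one `0`,
and each of them has a cyclic run of `n - 1` ones, so both `Λₙ(1ⁿ⁻¹)` and `Λₙ(1ⁿ⁻²)` avoid it.
Every other codeword of `D` is at distance at least `3` from `1ⁿ`, so it has at least three
`0`s and no cyclic run of `n - 2` ones: it is a vertex of both cubes. Removing one codeword from
a perfect code gives a perfect code of any induced subgraph with these two properties, and
`|D| = 2ⁿ / (n + 1)` because the radius-one balls around codewords partition `Qₙ`. -/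

open Finset

section Hamming

variable {ι β : Type*} [Fintype ι] [DecidableEq β]

lemma hammingDist_update_self_le_one [DecidableEq ι] (x : ι → β) (k : ι) (a : β) :
    hammingDist (Function.update x k a) x ≤ 1 := by
  have hk : ∀ i, Function.update x k a i ≠ x i → i = k := fun i hi => by
    by_contra hik
    exact hi (Function.update_of_ne hik a x)
  refine card_le_one.2 fun i hi j hj => ?_
  simp only [mem_filter, mem_univ, true_and] at hi hj
  exact (hk i hi).trans (hk j hj).symm

lemma hammingDist_update_lt [DecidableEq ι] {x y : ι → β} {k : ι} (hk : x k ≠ y k) :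
    hammingDist (Function.update x k (y k)) y < hammingDist x y := by
  refine card_lt_card ((ssubset_iff_of_subset fun i => ?_).2 ⟨k, by simpa using hk, by simp⟩)
  simp only [mem_filter, mem_univ, true_and]
  intro hi
  rwa [Function.update_of_ne (by rintro rfl; simp at hi)] at hi

lemma eq_of_hammingDist_le_one {x y : ι → β} (h : hammingDist x y ≤ 1) {i k : ι}
    (hk : x k ≠ y k) (hi : i ≠ k) : x i = y i := by
  by_contra hxy
  exact hi (card_le_one.1 h i (by simpa using hxy) k (by simpa using hk))

lemma ZMod.eq_add_one_of_ne {a b : ZMod 2} (h : a ≠ b) : a = b + 1 := by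
  revert a b; decide

lemma card_hammingDist_le_one [DecidableEq ι] (d : ι → ZMod 2) :
    #{v | hammingDist v d ≤ 1} = Fintype.card ι + 1 := by
  set toggle : ι → ι → ZMod 2 := fun i => Function.update d i (d i + 1)
  have htoggle : ∀ i, toggle i i ≠ d i := fun i => by simp [toggle]
  have htoggle_of_ne : ∀ {i j}, j ≠ i → toggle i j = d j := fun h => Function.update_of_ne h _ d
  have hball : ({v | hammingDist v d ≤ 1} : Finset _) = insert d (univ.image toggle) := by
    ext v
    simp only [mem_filter, mem_univ, true_and, mem_insert, mem_image]
    constructor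
    · intro h
      refine or_iff_not_imp_left.2 fun hv => ?_
      obtain ⟨k, hk⟩ := Function.ne_iff.1 hv
      refine ⟨k, funext fun i => ?_⟩
      rcases eq_or_ne i k with rfl | hik
      · simp [toggle, ZMod.eq_add_one_of_ne hk]
      · rw [htoggle_of_ne hik]
        exact (eq_of_hammingDist_le_one h hk hik).symm
    · rintro (rfl | ⟨i, rfl⟩)
      · simp
      · exact hammingDist_update_self_le_one d i _
  rw [hball, card_insert_of_notMem, card_image_of_injective, card_univ]
  · intro i j hij
    by_contra hne
    have := congrFun hij i
    rw [htoggle_of_ne hne] at this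
    exact htoggle i this
  · intro hd
    obtain ⟨i, -, hi⟩ := mem_image.1 hd
    exact htoggle i (congrFun hi i)

end Hamming

section PerfectCode

variable {V : Type*} {G : SimpleGraph V}

lemma IsPerfectCode.sum_card_closedNbhd [Fintype V] [DecidableEq V] [DecidableRel G.Adj]
    {C : Finset V} (hC : IsPerfectCode G C) :
    ∑ c ∈ C, #{v | v = c ∨ G.Adj v c} = Fintype.card V := by
  rw [← card_biUnion, ← card_univ]
  · congr 1
    ext v
    obtain ⟨c, ⟨hc, hvc⟩, -⟩ := hC v
    simpa using ⟨c, hc, hvc⟩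
  · intro c hc d hd hne
    refine disjoint_filter.2 fun v _ hvc hvd => hne ?_
    exact (hC v).unique ⟨hc, hvc⟩ ⟨hd, hvd⟩

lemma IsPerfectCode.induce_diff_singleton {C S : Set V} (hC : IsPerfectCode G C) {c₀ : V}
    (hS : ∀ v ∈ S, ¬(v = c₀ ∨ G.Adj v c₀)) (hCS : ∀ c ∈ C, c ≠ c₀ → c ∈ S) :
    IsPerfectCode (G.induce S) {x : S | x.1 ∈ C ∧ x.1 ≠ c₀} := by
  intro v
  obtain ⟨c, ⟨hc, hvc⟩, huniq⟩ := hC v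
  have hne : c ≠ c₀ := by
    rintro rfl
    exact hS v v.2 hvc
  refine ⟨⟨c, hCS c hc hne⟩, ⟨⟨hc, hne⟩, ?_⟩, ?_⟩
  · simpa [Subtype.ext_iff] using hvc
  · rintro y ⟨⟨hy, -⟩, hvy⟩
    exact Subtype.ext (huniq y ⟨hy, by simpa [Subtype.ext_iff] using hvy⟩)

end PerfectCode

section Hypercube

variable {n : ℕ}

lemma hypercube_eq_or_adj_iff {v c : Fin n → ZMod 2} :
    (v = c ∨ (hypercube n).Adj v c) ↔ hammingDist v c ≤ 1 := by
  rw [Nat.le_one_iff_eq_zero_or_eq_one, hammingDist_eq_zero]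
  rfl

lemma IsPerfectCode.three_le_hammingDist {C : Set (Fin n → ZMod 2)}
    (hC : IsPerfectCode (hypercube n) C) {c d : Fin n → ZMod 2} (hc : c ∈ C) (hd : d ∈ C)
    (hne : c ≠ d) : 3 ≤ hammingDist c d := by
  by_contra! hcd
  obtain ⟨k, hk⟩ := Function.ne_iff.1 hne
  have hvc := hammingDist_update_self_le_one c k (d k)
  have hvd : hammingDist (Function.update c k (d k)) d ≤ 1 := by
    have := hammingDist_update_lt hk; omega
  exact hne ((hC _).unique ⟨hc, hypercube_eq_or_adj_iff.2 hvc⟩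
    ⟨hd, hypercube_eq_or_adj_iff.2 hvd⟩)

lemma IsPerfectCode.card_mul_succ_eq_two_pow {C : Finset (Fin n → ZMod 2)}
    (hC : IsPerfectCode (hypercube n) C) : #C * (n + 1) = 2 ^ n := by
  classical
  have hball : ∀ c : Fin n → ZMod 2, #{v | v = c ∨ (hypercube n).Adj v c} = n + 1 := fun c => by
    simp_rw [hypercube_eq_or_adj_iff]
    rw [card_hammingDist_le_one, Fintype.card_fin]
  have := hC.sum_card_closedNbhd
  simp only [hball, sum_const, smul_eq_mul, Fintype.card_pi, Fintype.card_fin, ZMod.card,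
    prod_const, card_univ] at this
  exact this

end Hypercube

section LucasCube

variable {n s : ℕ} {b : Fin n → ZMod 2}

lemma genLucas_eq_induce : genLucas n s = (hypercube n).induce {b | ¬hasCircOnes n s b} := rfl

lemma hammingDist_one_le_of_hasCircOnes (h : hasCircOnes n s b) : hammingDist b 1 ≤ n - s := by
  obtain ⟨i, t, hts, hb⟩ := h
  set pos : ℕ → Fin n := fun j => ⟨(i + t + j) % n, Nat.mod_lt _ i.pos⟩
  have hinj : Set.InjOn pos (range s) := fun j₁ h₁ j₂ h₂ h => by
    have := Nat.ModEq.add_left_cancel' _ (Fin.mk.inj_iff.1 h)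
    rwa [Nat.ModEq, Nat.mod_eq_of_lt (by simp at h₁; omega),
      Nat.mod_eq_of_lt (by simp at h₂; omega)] at this
  have hsub : ({k | b k ≠ 1} : Finset _) ⊆ ((range s).image pos)ᶜ := fun k => by
    simp only [mem_filter, mem_univ, true_and, mem_compl, mem_image, mem_range]
    rintro hk ⟨j, hj, rfl⟩
    exact hk (hb j hj)
  calc hammingDist b 1 ≤ #((range s).image pos)ᶜ := card_le_card hsub
    _ = n - s := by rw [card_compl, card_image_of_injOn hinj, card_range, Fintype.card_fin]

lemma hasCircOnes_of_hammingDist_one_le_one (hs : s < n) (h : hammingDist b 1 ≤ 1) :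
    hasCircOnes n s b := by
  obtain ⟨k, hk⟩ : ∃ k : Fin n, ∀ i ≠ k, b i = 1 := by
    by_cases hb : b = 1
    · exact ⟨⟨0, by omega⟩, fun i _ => by simp [hb]⟩
    · obtain ⟨k, hk⟩ := Function.ne_iff.1 hb
      exact ⟨k, fun i hi => eq_of_hammingDist_le_one h hk hi⟩
  -- the cyclic window of length `s` starting just after the only possible `0`, at `k`
  refine ⟨k, 1, by omega, fun j hj => hk _ fun hjk => ?_⟩
  have hmod : (k + (1 + j)) % n = (k + 0) % n := by
    simpa [add_assoc, Nat.mod_eq_of_lt k.isLt] using congrArg Fin.val hjk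
  have hdvd := (Nat.modEq_zero_iff_dvd).1 (Nat.ModEq.add_left_cancel' _ hmod)
  have := Nat.le_of_dvd (by omega) hdvd
  omega

end LucasCube

/-- For n = 2^p - 1 (p ≥ 2) and D a Hamming code (linear perfect code of Q_n
containing 1^n), C = D \ {1^n} is a perfect code of both Λ_n(1^(n-1)) and
Λ_n(1^(n-2)), of cardinality 2^n/(n+1) - 1. -/
theorem stmt19 (p n : ℕ) (hp : 2 ≤ p) (hn : n = 2 ^ p - 1)
    (D : Submodule (ZMod 2) (Fin n → ZMod 2))
    (hD : IsPerfectCode (hypercube n) (D : Set (Fin n → ZMod 2)))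
    (h1 : (fun _ => (1 : ZMod 2)) ∈ D) :
    IsPerfectCode (genLucas n (n - 1))
      {x : {b : Fin n → ZMod 2 // ¬ hasCircOnes n (n - 1) b} |
        x.1 ∈ D ∧ x.1 ≠ fun _ => (1 : ZMod 2)}
    ∧ IsPerfectCode (genLucas n (n - 2))
      {x : {b : Fin n → ZMod 2 // ¬ hasCircOnes n (n - 2) b} |
        x.1 ∈ D ∧ x.1 ≠ fun _ => (1 : ZMod 2)}
    ∧ {x : {b : Fin n → ZMod 2 // ¬ hasCircOnes n (n - 1) b} |
        x.1 ∈ D ∧ x.1 ≠ fun _ => (1 : ZMod 2)}.ncard = 2 ^ n / (n + 1) - 1 := by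
  rw [← Pi.one_def] at h1 ⊢
  have hn₀ : 0 < n := by have := Nat.one_lt_two_pow (n := p) (by omega); omega
  have hcodeword : ∀ s, n - 2 ≤ s → ∀ c ∈ D, c ≠ 1 → ¬hasCircOnes n s c :=
    fun s hs c hc hne hcirc => by
      have := hD.three_le_hammingDist hc h1 hne
      have := hammingDist_one_le_of_hasCircOnes hcirc
      omega
  have hperfect : ∀ s, n - 2 ≤ s → s < n → IsPerfectCode (genLucas n s)
      {x : {b : Fin n → ZMod 2 // ¬hasCircOnes n s b} | x.1 ∈ D ∧ x.1 ≠ 1} := by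
    intro s hs hsn
    rw [genLucas_eq_induce]
    exact hD.induce_diff_singleton
      (fun v hv hclose => hv (hasCircOnes_of_hammingDist_one_le_one hsn
        (hypercube_eq_or_adj_iff.1 hclose)))
      (hcodeword s hs)
  refine ⟨hperfect _ (by omega) (by omega), hperfect _ le_rfl (by omega), ?_⟩
  classical
  have hcard := (Set.coe_toFinset (D : Set (Fin n → ZMod 2)) ▸ hD).card_mul_succ_eq_two_pow
  rw [Nat.div_eq_of_eq_mul_left (by omega) hcard.symm]
  change (Subtype.val ⁻¹' ((D : Set (Fin n → ZMod 2)) \ {1})).ncard = _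
  have hsub : (D : Set (Fin n → ZMod 2)) \ {1} ⊆
      Set.range (Subtype.val : {b // ¬hasCircOnes n (n - 1) b} → _) :=
    fun c hc => ⟨⟨c, hcodeword _ (by omega) c hc.1 hc.2⟩, rfl⟩
  rw [Set.ncard_preimage_of_injective_subset_range Subtype.val_injective hsub,
    Set.ncard_sdiff_singleton_of_mem h1, Set.ncard_eq_toFinset_card']
end
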